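/- For every integer n ≥ 5 and every real x with exp(−√n) ≤ x ≤ 1, one has |N_n(−x)| ≤ exp(−√n) · N_n(x); equivalently, |N_n(x)/N_n(−x)| ≥ exp(√n) whenever N_n(−x) ≠ 0. -/

import Mathlib

/-- `newmanAlpha n = exp(-1/√n)`. -/
noncomputable def newmanAlpha (n : ℕ) : ℝ := Real.exp (-1 / Real.sqrt n)

/-- The Newman polynomial `N_n(t) = ∏_{i=1}^{n-1} (t + α_n^i)`. -/
noncomputable def newmanPoly (n : ℕ) (t : ℝ) : ℝ :=
  ∏ i ∈ Finset.Icc 1 (n - 1), (t + (newmanAlpha n) ^ i)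

/-- The Newman approximant `A_n(t) = t (N_n(t) - N_n(-t)) / (N_n(t) + N_n(-t))`. -/
noncomputable def newmanApprox (n : ℕ) (t : ℝ) : ℝ :=
  t * (newmanPoly n t - newmanPoly n (-t)) / (newmanPoly n t + newmanPoly n (-t))

/-!
Locate `x` between consecutive powers of `α = α_n`, say `α^(k+1) ≤ x ≤ α^k` with `k < n`. Each
factor then satisfies `|α^i - x| ≤ exp(-2c) (α^i + x)` with `c = α^(k+1-i)` for `i ≤ k` and
`c = α^i` for `i > k`, by the elementary bound `(1 - c)/(1 + c) ≤ exp(-2c)`. As `i ↦ k+1-i`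
permutes `1, …, k`, these exponents add up to `∑_{i=1}^{n-1} α^i = (α - α^n)/(1 - α)`, which is
at least `√n/2` because `1 - α ≤ 1/√n`, `α^n = exp(-√n)` and `exp(-1/√n) - exp(-√n) ≥ 1/2`
once `n ≥ 5`.
-/

open Real Finset

lemma one_sub_le_one_add_mul_exp_neg_two_mul {c : ℝ} (hc : 0 ≤ c) :
    1 - c ≤ (1 + c) * exp (-(2 * c)) := by
  rcases lt_or_ge c 1 with hc1 | hc1
  · have hlog : 2 * c ≤ log ((1 + c) / (1 - c)) := by
      have := sum_range_le_log_div hc hc1 1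
      norm_num at this
      linarith
    have hexp : exp (2 * c) ≤ (1 + c) / (1 - c) :=
      (exp_le_exp.2 hlog).trans_eq (exp_log (by apply div_pos <;> linarith))
    rw [le_div_iff₀ (by linarith)] at hexp
    rw [exp_neg, ← div_eq_mul_inv, le_div_iff₀ (exp_pos _)]
    linarith
  · nlinarith [exp_pos (-(2 * c))]

lemma abs_sub_le_exp_neg_two_mul_mul_add {a b c : ℝ} (ha : 0 ≤ a) (hb : 0 ≤ b) (hc : 0 ≤ c)
    (hca : c * a ≤ b) (hcb : c * b ≤ a) :
    |a - b| ≤ exp (-(2 * c)) * (a + b) := by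
  have hpade : |a - b| * (1 + c) ≤ (1 - c) * (a + b) := by
    cases abs_cases (a - b) <;> nlinarith
  have := mul_le_mul_of_nonneg_right (one_sub_le_one_add_mul_exp_neg_two_mul hc)
    (add_nonneg ha hb)
  rw [← mul_le_mul_iff_of_pos_right (by linarith : 0 < 1 + c)]
  nlinarith

lemma abs_prod_le_exp_neg_two_mul_sum_mul_prod {ι : Type*} (s : Finset ι) (f g c : ι → ℝ)
    (h : ∀ i ∈ s, |f i| ≤ exp (-(2 * c i)) * g i) :
    |∏ i ∈ s, f i| ≤ exp (-(2 * ∑ i ∈ s, c i)) * ∏ i ∈ s, g i := by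
  rw [abs_prod, mul_sum, ← sum_neg_distrib, exp_sum, ← prod_mul_distrib]
  exact prod_le_prod (fun i _ ↦ abs_nonneg _) h

lemma sum_Icc_one_comp_reverse_initial {M : Type*} [AddCommMonoid M] (f : ℕ → M) {k m : ℕ}
    (hkm : k ≤ m) :
    ∑ i ∈ Icc 1 m, f (if i ≤ k then k + 1 - i else i) = ∑ i ∈ Icc 1 m, f i := by
  refine sum_nbij' (fun i ↦ if i ≤ k then k + 1 - i else i)
    (fun i ↦ if i ≤ k then k + 1 - i else i) ?_ ?_ ?_ ?_ (fun _ _ ↦ rfl) <;>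
  · intro i hi
    simp only [mem_Icc] at hi ⊢
    split_ifs <;> omega

lemma exists_pow_succ_le_and_le_pow {α x : ℝ} {n : ℕ} (hn : n ≠ 0) (hlo : α ^ n ≤ x)
    (hhi : x ≤ 1) : ∃ k < n, α ^ (k + 1) ≤ x ∧ x ≤ α ^ k := by
  induction n with
  | zero => exact absurd rfl hn
  | succ n ih =>
    by_cases hxn : x ≤ α ^ n
    · exact ⟨n, n.lt_succ_self, hlo, hxn⟩
    · rcases n with _ | n
      · simp_all
      · obtain ⟨k, hk, hk'⟩ := ih n.succ_ne_zero (not_le.1 hxn).le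
        exact ⟨k, by omega, hk'⟩

lemma abs_neg_add_pow_le {α x : ℝ} (hα0 : 0 ≤ α) (hα1 : α ≤ 1) {k : ℕ} (hlo : α ^ (k + 1) ≤ x)
    (hhi : x ≤ α ^ k) (i : ℕ) :
    |-x + α ^ i| ≤ exp (-(2 * α ^ (if i ≤ k then k + 1 - i else i))) * (x + α ^ i) := by
  have hx0 : 0 ≤ x := (pow_nonneg hα0 _).trans hlo
  have hanti : Antitone (α ^ · : ℕ → ℝ) := pow_right_anti₀ hα0 hα1
  rw [neg_add_eq_sub, abs_sub_comm]
  apply abs_sub_le_exp_neg_two_mul_mul_add hx0 (pow_nonneg hα0 i) (pow_nonneg hα0 _)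
  all_goals split_ifs with hik
  · calc α ^ (k + 1 - i) * x ≤ α ^ (k + 1 - i) * α ^ k := by gcongr
      _ = α ^ (k + 1 - i + k) := (pow_add _ _ _).symm
      _ ≤ α ^ i := hanti (by omega)
  · calc α ^ i * x ≤ α ^ i * 1 := by gcongr; exact hhi.trans (pow_le_one₀ hα0 hα1)
      _ = α ^ i := mul_one _
  · rwa [← pow_add, Nat.sub_add_cancel (by omega)]
  · calc α ^ i * α ^ i = α ^ (i + i) := (pow_add _ _ _).symm
      _ ≤ α ^ (k + 1) := hanti (by omega)
      _ ≤ x := hlo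

lemma abs_prod_neg_add_pow_le {α x : ℝ} (hα0 : 0 ≤ α) (hα1 : α ≤ 1) {k m : ℕ} (hkm : k ≤ m)
    (hlo : α ^ (k + 1) ≤ x) (hhi : x ≤ α ^ k) :
    |∏ i ∈ Icc 1 m, (-x + α ^ i)| ≤
      exp (-(2 * ∑ i ∈ Icc 1 m, α ^ i)) * ∏ i ∈ Icc 1 m, (x + α ^ i) := by
  rw [← sum_Icc_one_comp_reverse_initial (α ^ ·) hkm]
  exact abs_prod_le_exp_neg_two_mul_sum_mul_prod _ _ _ _
    fun i _ ↦ abs_neg_add_pow_le hα0 hα1 hlo hhi i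

lemma geom_sum_Icc_one_mul_one_sub (α : ℝ) (m : ℕ) :
    (∑ i ∈ Icc 1 m, α ^ i) * (1 - α) = α - α ^ (m + 1) := by
  rw [← Ico_add_one_right_eq_Icc, geom_sum_Ico_mul_neg _ (by omega), pow_one]

lemma half_le_exp_neg_inv_sub_exp_neg {s : ℝ} (hs : 20 / 9 ≤ s) :
    1 / 2 ≤ exp (-1 / s) - exp (-s) := by
  have hinv : exp (-(9 / 20)) ≤ exp (-1 / s) := by
    rw [exp_le_exp, neg_div, neg_le_neg_iff, div_le_iff₀ (by linarith)]
    linarith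
  have hlower : (1 - 9 / 20 / 10 : ℝ) ^ 10 ≤ exp (-(9 / 20)) :=
    one_sub_div_pow_le_exp_neg (by norm_num)
  have hupper : exp (-s) ≤ (∑ i ∈ range 6, (20 / 9 : ℝ) ^ i / i.factorial)⁻¹ := by
    rw [exp_neg]
    exact inv_anti₀ (by positivity)
      ((sum_le_exp_of_nonneg (by norm_num) 6).trans (exp_le_exp.2 hs))
  -- `0.631 ≤ exp (-1 / s)` and `exp (-s) ≤ 0.112`
  norm_num [sum_range_succ, Nat.factorial] at hlower hupper
  linarith

lemma newmanAlpha_pos (n : ℕ) : 0 < newmanAlpha n := exp_pos _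

lemma newmanAlpha_lt_one {n : ℕ} (hn : n ≠ 0) : newmanAlpha n < 1 :=
  exp_lt_one_iff.2 (div_neg_of_neg_of_pos (by norm_num) (by positivity))

lemma newmanAlpha_pow_self (n : ℕ) : newmanAlpha n ^ n = exp (-√n) := by
  rw [newmanAlpha, ← exp_nat_mul, mul_div, mul_neg_one, neg_div, div_sqrt]

lemma sqrt_mul_one_sub_newmanAlpha_le_one (n : ℕ) : √n * (1 - newmanAlpha n) ≤ 1 := by
  have := add_one_le_exp (-1 / √n)
  rw [← newmanAlpha] at this
  rcases (sqrt_nonneg (n : ℝ)).eq_or_lt with h | h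
  · simp [← h]
  · calc √n * (1 - newmanAlpha n) ≤ √n * (1 / √n) := by gcongr; linarith [neg_div √n 1]
      _ = 1 := mul_one_div_cancel h.ne'

lemma sqrt_le_two_mul_sum_newmanAlpha_pow {n : ℕ} (hn : 5 ≤ n) :
    √n ≤ 2 * ∑ i ∈ Icc 1 (n - 1), newmanAlpha n ^ i := by
  have hgap : 0 < 1 - newmanAlpha n := sub_pos.2 (newmanAlpha_lt_one (by omega))
  have hsqrt : 20 / 9 ≤ √(n : ℝ) := by
    rw [le_sqrt (by norm_num) (by positivity)]
    have : (5 : ℝ) ≤ n := by exact_mod_cast hn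
    linarith
  have hgeom := geom_sum_Icc_one_mul_one_sub (newmanAlpha n) (n - 1)
  rw [Nat.sub_add_cancel (by omega), newmanAlpha_pow_self] at hgeom
  have hhalf : 1 / 2 ≤ newmanAlpha n - exp (-√n) := half_le_exp_neg_inv_sub_exp_neg hsqrt
  refine le_of_mul_le_mul_right ?_ hgap
  calc √n * (1 - newmanAlpha n) ≤ 1 := sqrt_mul_one_sub_newmanAlpha_le_one n
    _ ≤ 2 * (newmanAlpha n - exp (-√n)) := by linarith
    _ = 2 * (∑ i ∈ Icc 1 (n - 1), newmanAlpha n ^ i) * (1 - newmanAlpha n) := by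
      rw [mul_assoc, hgeom]

lemma newmanPoly_pos (n : ℕ) {x : ℝ} (hx : 0 ≤ x) : 0 < newmanPoly n x :=
  prod_pos fun i _ ↦ add_pos_of_nonneg_of_pos hx (pow_pos (newmanAlpha_pos n) i)

/-- Newman's inequality (Lemma 3.2, Ch. 7 of Lorentz). -/
theorem newman_inequality (n : ℕ) (hn : 5 ≤ n) (x : ℝ)
    (hx1 : Real.exp (-Real.sqrt n) ≤ x) (hx2 : x ≤ 1) :
    |newmanPoly n (-x)| ≤ Real.exp (-Real.sqrt n) * newmanPoly n x ∧
      (newmanPoly n (-x) ≠ 0 →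
        Real.exp (Real.sqrt n) ≤ |newmanPoly n x / newmanPoly n (-x)|) := by
  obtain ⟨k, hkn, hlo, hhi⟩ := exists_pow_succ_le_and_le_pow (α := newmanAlpha n) (n := n)
    (by omega) (by rwa [newmanAlpha_pow_self]) hx2
  have hpos : 0 < newmanPoly n x := newmanPoly_pos n ((exp_pos _).le.trans hx1)
  have hbound : |newmanPoly n (-x)| ≤ exp (-√n) * newmanPoly n x := by
    refine (abs_prod_neg_add_pow_le (newmanAlpha_pos n).le (newmanAlpha_lt_one (by omega)).le
      (by omega : k ≤ n - 1) hlo hhi).trans (mul_le_mul_of_nonneg_right ?_ hpos.le)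
    exact exp_le_exp.2 (by linarith [sqrt_le_two_mul_sum_newmanAlpha_pow hn])
  refine ⟨hbound, fun hne ↦ ?_⟩
  rw [abs_div, abs_of_pos hpos, le_div_iff₀ (abs_pos.2 hne)]
  calc exp √n * |newmanPoly n (-x)| ≤ exp √n * (exp (-√n) * newmanPoly n x) := by gcongr
    _ = newmanPoly n x := by rw [← mul_assoc, ← exp_add, add_neg_cancel, exp_zero, one_mul]
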